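/- For any instance with common requirements (all p_i = p, all q_i = q), the optimal number of machines m in the single-instanced model and the optimal number m' in the multi-instanced model satisfy m < 2·m'. -/
import Mathlib


/-- Single-instanced model with common (rational) requirements `p`, `q`. -/
def FeasibleSingle (n k : ℕ) (p q P Q : ℚ) (f : Fin n → Fin k) : Prop :=
  ∀ j, ((Finset.univ.filter (fun i => f i = j)).card : ℚ) * p ≤ P ∧
       ((Finset.univ.filter (fun i => f i = j)).card : ℚ) * q ≤ Q

/-- Multi-instanced model with common (rational) requirements `p`, `q`. -/
def FeasibleMulti (n k : ℕ) (p q P Q : ℚ) (x : Fin n → Fin k → ℚ) : Prop :=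
  (∀ i j, 0 ≤ x i j) ∧
  (∀ i, p ≤ ∑ j, x i j) ∧
  (∀ j, ∑ i, x i j ≤ P) ∧
  (∀ j, ((Finset.univ.filter (fun i => x i j ≠ 0)).card : ℚ) * q ≤ Q)

/-- With common requirements, the optimal single-instanced machine count `m` and
the optimal multi-instanced machine count `m'` satisfy `m < 2 m'`. -/
theorem single_lt_two_mul_multi (n : ℕ) (hn : 0 < n) (p q P Q : ℚ)
    (hp : 0 < p) (hq : 0 < q) (hpP : p ≤ P) (hqQ : q ≤ Q) (m m' : ℕ)
    (hm : IsLeast {k : ℕ | ∃ f : Fin n → Fin k, FeasibleSingle n k p q P Q f} m)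
    (hm' : IsLeast {k : ℕ | ∃ x : Fin n → Fin k → ℚ, FeasibleMulti n k p q P Q x} m') :
    m < 2 * m' := by
  obtain ⟨⟨x, hx0, hxp, hxP, hxQ⟩, _hmin'⟩ := hm'
  set a : ℕ := ⌊Q / q⌋₊ with ha
  set b : ℕ := ⌊P / p⌋₊ with hb
  have hP0 : 0 < P := lt_of_lt_of_le hp hpP
  have hQ0 : 0 < Q := lt_of_lt_of_le hq hqQ
  have ha1 : 1 ≤ a := Nat.le_floor (by
    rw [le_div_iff₀ hq]; simpa using hqQ)
  have hb1 : 1 ≤ b := Nat.le_floor (by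
    rw [le_div_iff₀ hp]; simpa using hpP)
  have haq : (a : ℚ) * q ≤ Q := by
    have h := Nat.floor_le (le_of_lt (div_pos hQ0 hq))
    rw [← ha] at h
    calc (a : ℚ) * q ≤ (Q / q) * q := mul_le_mul_of_nonneg_right h (le_of_lt hq)
      _ = Q := div_mul_cancel₀ Q (ne_of_gt hq)
  have hbp : (b : ℚ) * p ≤ P := by
    have h := Nat.floor_le (le_of_lt (div_pos hP0 hp))
    rw [← hb] at h
    calc (b : ℚ) * p ≤ (P / p) * p := mul_le_mul_of_nonneg_right h (le_of_lt hp)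
      _ = P := div_mul_cancel₀ P (ne_of_gt hp)
  -- m' ≥ 1
  have hm'1 : 1 ≤ m' := by
    rcases Nat.eq_zero_or_pos m' with h | h
    · exfalso
      subst h
      have := hxp ⟨0, hn⟩
      simp at this
      linarith
    · exact h
  -- memory incidence bound : n ≤ m' * a
  have hinc : n ≤ m' * a := by
    have h1 : ∀ i : Fin n, 1 ≤ (Finset.univ.filter (fun j => x i j ≠ 0)).card := by
      intro i
      by_contra h
      push_neg at h
      interval_cases hcard : (Finset.univ.filter (fun j => x i j ≠ 0)).card
      rw [Finset.card_eq_zero, Finset.filter_eq_empty_iff] at hcard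
      have hz : ∑ j, x i j = 0 := Finset.sum_eq_zero (fun j hj => by
        have := hcard hj; push_neg at this; exact this)
      have := hxp i
      rw [hz] at this
      linarith
    have h2 : ∀ j : Fin m', (Finset.univ.filter (fun i => x i j ≠ 0)).card ≤ a := by
      intro j
      apply Nat.le_floor
      rw [le_div_iff₀ hq]
      exact hxQ j
    have hswap : ∑ j : Fin m', (Finset.univ.filter (fun i => x i j ≠ 0)).card
        = ∑ i : Fin n, (Finset.univ.filter (fun j => x i j ≠ 0)).card := by
      simp_rw [Finset.card_filter]
      exact Finset.sum_comm
    calc n = ∑ _i : Fin n, 1 := by simp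
      _ ≤ ∑ i : Fin n, (Finset.univ.filter (fun j => x i j ≠ 0)).card :=
          Finset.sum_le_sum (fun i _ => h1 i)
      _ = ∑ j : Fin m', (Finset.univ.filter (fun i => x i j ≠ 0)).card := hswap.symm
      _ ≤ ∑ _j : Fin m', a := Finset.sum_le_sum (fun j _ => h2 j)
      _ = m' * a := by simp [mul_comm]
  -- load bound : n < m' * (b+1)
  have hload : (n : ℚ) * p ≤ (m' : ℚ) * P := by
    calc (n : ℚ) * p = ∑ _i : Fin n, p := by simp [mul_comm]
      _ ≤ ∑ i : Fin n, ∑ j, x i j := Finset.sum_le_sum (fun i _ => hxp i)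
      _ = ∑ j : Fin m', ∑ i, x i j := Finset.sum_comm
      _ ≤ ∑ _j : Fin m', P := Finset.sum_le_sum (fun j _ => hxP j)
      _ = (m' : ℚ) * P := by simp [mul_comm]
  have hnb : n < m' * (b + 1) := by
    have hPb : P < ((b : ℚ) + 1) * p := by
      have h := Nat.lt_floor_add_one (P / p)
      rw [← hb] at h
      calc P = (P / p) * p := (div_mul_cancel₀ P (ne_of_gt hp)).symm
        _ < ((b : ℚ) + 1) * p := mul_lt_mul_of_pos_right h hp
    have h1 : (n : ℚ) * p < (m' : ℚ) * (((b : ℚ) + 1) * p) :=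
      lt_of_le_of_lt hload (by
        apply mul_lt_mul_of_pos_left hPb
        exact_mod_cast hm'1)
    have h2 : (n : ℚ) < (m' : ℚ) * ((b : ℚ) + 1) := by
      rw [← mul_assoc] at h1
      exact lt_of_mul_lt_mul_right h1 (le_of_lt hp)
    exact_mod_cast (by push_cast; linarith : (n : ℚ) < ((m' * (b + 1) : ℕ) : ℚ))
  -- upper bound on m : m ≤ (n-1)/c + 1 where c = min a b
  set c : ℕ := min a b with hc
  have hc1 : 1 ≤ c := le_min ha1 hb1
  have hc0 : 0 < c := hc1
  have hlt : ∀ i : Fin n, i.val / c < (n - 1) / c + 1 := by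
    intro i
    have h1 : i.val ≤ n - 1 := by omega
    have := Nat.div_le_div_right (c := c) h1
    omega
  have hmk : m ≤ (n - 1) / c + 1 := by
    apply hm.2
    refine ⟨fun i => ⟨i.val / c, hlt i⟩, fun j => ?_⟩
    have hcard : (Finset.univ.filter
        (fun i : Fin n => (⟨i.val / c, hlt i⟩ : Fin ((n - 1) / c + 1)) = j)).card ≤ c := by
      have hle := Finset.card_le_card_of_injOn (t := Finset.range c)
        (fun i : Fin n => i.val % c)
        (s := Finset.univ.filter
          (fun i : Fin n => (⟨i.val / c, hlt i⟩ : Fin ((n - 1) / c + 1)) = j))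
        (fun i _ => Finset.mem_range.mpr (Nat.mod_lt _ hc0))
        (by
          intro i1 h1 i2 h2 he
          simp only [Finset.coe_filter, Set.mem_setOf_eq, Finset.mem_univ, true_and,
            Fin.mk_eq_mk] at h1 h2
          have he' : i1.val % c = i2.val % c := he
          have hd1 : i1.val / c = j.val := congrArg Fin.val h1
          have hd2 : i2.val / c = j.val := congrArg Fin.val h2
          apply Fin.ext
          calc i1.val = c * (i1.val / c) + i1.val % c := (Nat.div_add_mod _ _).symm
            _ = c * j.val + i2.val % c := by rw [hd1, he']
            _ = c * (i2.val / c) + i2.val % c := by rw [hd2]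
            _ = i2.val := Nat.div_add_mod _ _)
      simpa using hle
    constructor
    · calc ((Finset.univ.filter _).card : ℚ) * p ≤ (c : ℚ) * p := by
            apply mul_le_mul_of_nonneg_right _ (le_of_lt hp)
            exact_mod_cast hcard
        _ ≤ (b : ℚ) * p := by
            apply mul_le_mul_of_nonneg_right _ (le_of_lt hp)
            exact_mod_cast min_le_right a b
        _ ≤ P := hbp
    · calc ((Finset.univ.filter _).card : ℚ) * q ≤ (c : ℚ) * q := by
            apply mul_le_mul_of_nonneg_right _ (le_of_lt hq)
            exact_mod_cast hcard
        _ ≤ (a : ℚ) * q := by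
            apply mul_le_mul_of_nonneg_right _ (le_of_lt hq)
            exact_mod_cast min_le_left a b
        _ ≤ Q := haq
  -- conclude
  rcases le_or_gt a b with hab | hab
  · -- c = a, m ≤ (n-1)/a + 1 ≤ m'
    have hca : c = a := min_eq_left hab
    rw [hca] at hmk
    have hdiv : (n - 1) / a < m' := by
      rw [Nat.div_lt_iff_lt_mul (by omega : 0 < a)]
      generalize hg : m' * a = g at hinc
      omega
    generalize hd : (n - 1) / a = d at hmk hdiv
    omega
  · -- c = b
    have hcb : c = b := min_eq_right (le_of_lt hab)
    rw [hcb] at hmk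
    obtain ⟨s, rfl⟩ := Nat.exists_eq_add_of_le hm'1
    have hU : s ≤ s * b := Nat.le_mul_of_pos_right s (by omega)
    have hdiv : (n - 1) / b < 2 * s + 1 := by
      rw [Nat.div_lt_iff_lt_mul (by omega : 0 < b)]
      have hexp : (1 + s) * (b + 1) = s * b + b + s + 1 := by ring
      rw [hexp] at hnb
      have hgoal : (2 * s + 1) * b = 2 * (s * b) + b := by ring
      rw [hgoal]
      generalize hsb : s * b = U at hU hnb ⊢
      omega
    generalize hd : (n - 1) / b = d at hmk hdiv
    omega
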